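/- Let 1 < p < 3, m ∈ ℝ, c > 0, a ∈ ℝ³, and R > 0; set β := (3−p)/(p−1) and φ(x) := ⟨a, x/|x|⟩. Suppose u, w, H : E_R → ℝ satisfy u < 1 and w > 0 on E_R and, as |x| → ∞: u(x) = 1 − (c/β)·|x|^{−β} + ((3−p)/2)·c·(m + φ(x))·|x|^{−2/(p−1)} + o(|x|^{−2/(p−1)}); w(x) = c·|x|^{−2/(p−1)}·[1 − (2m/(p−1) + ((3−p)/(p−1))·φ(x))/|x| + o(1/|x|)]; H(x) = (2/|x|)·[1 − (2m + ((3−p)/2)·φ(x))/|x| + o(1/|x|)]. Define I_p(x) := c^{(3p−7)/(3−p)}·((1/β)·(1/(1−u(x))))^{1/β}·[ c^{3−p} + ((c/β)·(1/(1−u(x))))²·w(x)^{3−p} − (c²/β)·(1/(1−u(x)))·w(x)^{2−p}·H(x) ]. Then I_p(x) → 2m·c^{1−p} as |x| → ∞. -/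

import Mathlib

/-!
Normalize `u`, `w`, `H` by their leading terms: `P = (1 - u) / ((c/β)|x|^{-β})`,
`Q = w / (c|x|^{-(β+1)})` and `S = H / (2|x|^{-1})`, where `β + 1 = 2/(p-1)`. The expansions say
that `|x|(P - 1)`, `|x|(Q - 1)` and `|x|(S - 1)` are bounded affine functions of `φ` up to `o(1)`.
In these variables `I_p = c^{1-p} P^{-1/β-2} |x| G(P, Q, S)` with
`G(P, Q, S) = P² + Q^{3-p} - 2 Q^{2-p} S P`, which vanishes at `(1, 1, 1)` with differential
`(0, p - 1, -2)`. Hence `|x| G(P, Q, S)` has the limit of `(p - 1)|x|(Q - 1) - 2|x|(S - 1)`,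
in which the `φ`-terms cancel and `2m` is left.
-/

noncomputable section

open scoped RealInnerProductSpace
open Asymptotics Filter

abbrev E3 : Type := EuclideanSpace ℝ (Fin 3)

/-- The filter of neighbourhoods of infinity in `ℝ³`, i.e. `|x| → ∞`. -/
def normAtTop : Filter E3 := Filter.comap (fun x : E3 => ‖x‖) Filter.atTop

open Topology

section FirstOrder

variable {α : Type*} {l : Filter α} {s : α → ℝ}
  {E : Type*} [NormedAddCommGroup E] [NormedSpace ℝ E]

lemma isBigO_one_of_tendsto_add {f g : α → ℝ} (h : Tendsto (fun x => f x + g x) l (𝓝 0))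
    (hg : g =O[l] fun _ => (1 : ℝ)) : f =O[l] fun _ => (1 : ℝ) :=
  ((h.isBigO_one ℝ).sub hg).congr_left fun x => add_sub_cancel_right (f x) (g x)

lemma tendsto_of_isBigO_smul_sub {V : α → E} {v₀ : E} (hs : Tendsto s l atTop)
    (hV : (fun x => s x • (V x - v₀)) =O[l] fun _ => (1 : ℝ)) :
    Tendsto V l (𝓝 v₀) := by
  have hinv : (fun x => (s x)⁻¹) =o[l] fun _ => (1 : ℝ) :=
    (isLittleO_one_iff ℝ).2 (tendsto_inv_atTop_zero.comp hs)
  rw [← tendsto_sub_nhds_zero_iff, ← isLittleO_one_iff ℝ]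
  refine ((hinv.smul_isBigO hV).congr' ?_ (by simp)).trans_isBigO (isBigO_refl _ _)
  filter_upwards [hs.eventually_ne_atTop 0] with x hx
  rw [smul_smul, inv_mul_cancel₀ hx, one_smul]

lemma tendsto_one_of_tendsto_mul_sub_one_add {f g : α → ℝ} (hs : Tendsto s l atTop)
    (h : Tendsto (fun x => s x * (f x - 1) + g x) l (𝓝 0)) (hg : g =O[l] fun _ => (1 : ℝ)) :
    Tendsto f l (𝓝 1) :=
  tendsto_of_isBigO_smul_sub hs (isBigO_one_of_tendsto_add h hg)

lemma HasFDerivAt.tendsto_mul_sub_sub {F : E → ℝ} {F' : E →L[ℝ] ℝ} {v₀ : E}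
    (hF : HasFDerivAt F F' v₀) {V : α → E} (hs : Tendsto s l atTop)
    (hV : (fun x => s x • (V x - v₀)) =O[l] fun _ => (1 : ℝ)) :
    Tendsto (fun x => s x * (F (V x) - F v₀) - F' (s x • (V x - v₀))) l (𝓝 0) := by
  have h := ((isBigO_refl s l).smul_isLittleO
    (hF.isLittleO.comp_tendsto (tendsto_of_isBigO_smul_sub hs hV))).trans_isBigO hV
  refine ((isLittleO_one_iff ℝ).1 h).congr fun x => ?_
  simp [smul_eq_mul, mul_sub]

lemma tendsto_mul_div_rpow_sub_one_add {b γ : ℝ} (hb : b ≠ 0) (hs : ∀ᶠ x in l, 0 < s x)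
    {f g : α → ℝ}
    (h : (fun x => f x - b * s x ^ (-γ) * (1 - g x / s x)) =o[l] fun x => s x ^ (-γ - 1)) :
    Tendsto (fun x => s x * (f x / (b * s x ^ (-γ)) - 1) + g x) l (𝓝 0) := by
  have h0 := h.tendsto_div_nhds_zero.const_mul b⁻¹
  rw [mul_zero] at h0
  refine h0.congr' ?_
  filter_upwards [hs] with x hx
  have hpow := Real.rpow_pos_of_pos hx (-γ)
  rw [Real.rpow_sub_one hx.ne']
  field_simp
  ring

lemma isLittleO_one_sub_sub_rpow {b γ : ℝ} (hb : b ≠ 0) (hs : ∀ᶠ x in l, 0 < s x)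
    {u K : α → ℝ}
    (h : (fun x => u x - (1 - b * s x ^ (-γ) + K x * s x ^ (-(γ + 1))))
      =o[l] fun x => s x ^ (-(γ + 1))) :
    (fun x => 1 - u x - b * s x ^ (-γ) * (1 - K x / b / s x)) =o[l] fun x => s x ^ (-γ - 1) := by
  rw [neg_add', ← isLittleO_neg_left] at h
  refine h.congr' ?_ EventuallyEq.rfl
  filter_upwards [hs] with x hx
  rw [Real.rpow_sub_one hx.ne']
  field_simp
  ring

lemma isLittleO_sub_two_mul_rpow_neg_one {H k : α → ℝ} (hs : ∀ᶠ x in l, 0 < s x)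
    (h : (fun x => H x - 2 / s x * (1 - k x / s x)) =o[l] fun x => s x ^ (-2 : ℝ)) :
    (fun x => H x - 2 * s x ^ (-(1 : ℝ)) * (1 - k x / s x)) =o[l]
      fun x => s x ^ (-1 - 1 : ℝ) := by
  rw [show (-1 - 1 : ℝ) = -2 by norm_num]
  refine h.congr' ?_ EventuallyEq.rfl
  filter_upwards [hs] with x hx
  rw [Real.rpow_neg_one, div_eq_mul_inv]

end FirstOrder

lemma isBigO_inner_div_norm {F : Type*} [NormedAddCommGroup F] [InnerProductSpace ℝ F]
    (l : Filter F) (a : F) : (fun x => ⟪a, x⟫ / ‖x‖) =O[l] fun _ => (1 : ℝ) := by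
  refine IsBigO.of_bound ‖a‖ (Eventually.of_forall fun x => ?_)
  rw [norm_one, mul_one, norm_div, norm_norm]
  rcases (norm_nonneg x).eq_or_lt with h | h
  · rw [← h, div_zero]; positivity
  · exact div_le_of_le_mul₀ h.le (norm_nonneg a) (norm_inner_le_norm a x)

def integrandNumerator (p : ℝ) (v : ℝ × ℝ × ℝ) : ℝ :=
  v.1 ^ 2 + v.2.1 ^ (3 - p) - 2 * v.2.1 ^ (2 - p) * v.2.2 * v.1

lemma hasFDerivAt_integrandNumerator (p : ℝ) :
    HasFDerivAt (integrandNumerator p)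
      ((p - 1) • (ContinuousLinearMap.fst ℝ ℝ ℝ ∘L ContinuousLinearMap.snd ℝ ℝ (ℝ × ℝ))
        - (2 : ℝ) • (ContinuousLinearMap.snd ℝ ℝ ℝ ∘L ContinuousLinearMap.snd ℝ ℝ (ℝ × ℝ)))
      (1, 1, 1) := by
  have hP : HasFDerivAt (fun v : ℝ × ℝ × ℝ => v.1) _ (1, 1, 1) :=
    hasFDerivAt_fst (𝕜 := ℝ)
  have hQ : HasFDerivAt (fun v : ℝ × ℝ × ℝ => v.2.1) _ (1, 1, 1) :=
    (hasFDerivAt_snd (𝕜 := ℝ)).fst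
  have hS : HasFDerivAt (fun v : ℝ × ℝ × ℝ => v.2.2) _ (1, 1, 1) :=
    (hasFDerivAt_snd (𝕜 := ℝ)).snd
  have hG := ((hP.pow 2).add (hQ.rpow_const (p := 3 - p) (Or.inl one_ne_zero))).sub
    ((((hQ.rpow_const (p := 2 - p) (Or.inl one_ne_zero)).const_mul 2).mul hS).mul hP)
  refine hG.congr_fderiv (ContinuousLinearMap.ext fun v => ?_)
  simp only [Nat.add_one_sub_one, one_pow, nsmul_eq_mul, Nat.cast_ofNat, mul_one, Real.one_rpow,
    Pi.mul_apply, one_smul, smul_add, add_sub_add_left_eq_sub, sub_apply, smul_apply,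
    ContinuousLinearMap.comp_apply, ContinuousLinearMap.coe_snd', ContinuousLinearMap.coe_fst',
    smul_eq_mul, add_apply]
  ring

lemma tendsto_integrand_of_expansions {α : Type*} {l : Filter α} {s P Q S gP gQ gS : α → ℝ}
    {p β L : ℝ} (hs : Tendsto s l atTop)
    (hP : Tendsto (fun x => s x * (P x - 1) + gP x) l (𝓝 0))
    (hQ : Tendsto (fun x => s x * (Q x - 1) + gQ x) l (𝓝 0))
    (hS : Tendsto (fun x => s x * (S x - 1) + gS x) l (𝓝 0))
    (hgP : gP =O[l] fun _ => (1 : ℝ)) (hgQ : gQ =O[l] fun _ => (1 : ℝ))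
    (hgS : gS =O[l] fun _ => (1 : ℝ))
    (hg : Tendsto (fun x => 2 * gS x - (p - 1) * gQ x) l (𝓝 L)) :
    Tendsto (fun x =>
      (P x ^ (1 / β) * P x ^ 2)⁻¹ * (s x * integrandNumerator p (P x, Q x, S x))) l (𝓝 L) := by
  have hV : (fun x => s x • ((P x, Q x, S x) - (1, 1, 1))) =O[l] fun _ => (1 : ℝ) := by
    simp only [Prod.mk_sub_mk, Prod.smul_mk, smul_eq_mul]
    exact (isBigO_one_of_tendsto_add hP hgP).prod_left
      ((isBigO_one_of_tendsto_add hQ hgQ).prod_left (isBigO_one_of_tendsto_add hS hgS))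
  have hN : Tendsto (fun x => s x * integrandNumerator p (P x, Q x, S x)) l (𝓝 L) := by
    have h := (((hasFDerivAt_integrandNumerator p).tendsto_mul_sub_sub hs hV).add
      ((hQ.const_mul (p - 1)).sub (hS.const_mul 2))).add hg
    rw [mul_zero, mul_zero, sub_zero, add_zero, zero_add] at h
    refine h.congr fun x => ?_
    simp only [integrandNumerator, one_pow, Real.one_rpow, mul_one, Prod.mk_sub_mk, Prod.smul_mk,
      smul_eq_mul, sub_apply, smul_apply, ContinuousLinearMap.comp_apply,
      ContinuousLinearMap.coe_snd', ContinuousLinearMap.coe_fst']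
    ring
  have hP1 := tendsto_one_of_tendsto_mul_sub_one_add hs hP hgP
  have hpre :=
    ((hP1.rpow_const (p := 1 / β) (Or.inl one_ne_zero)).mul (hP1.pow 2)).inv₀ (by simp)
  simpa using hpre.mul hN

lemma integrand_eq {p β c s u w H P Q S : ℝ} (hp : 1 < p) (hp' : p < 3)
    (hβ : β = (3 - p) / (p - 1)) (hc : 0 < c) (hs : 0 < s) (hP : 0 < P) (hQ : 0 < Q)
    (hu : 1 - u = c / β * s ^ (-β) * P) (hw : w = c * s ^ (-(β + 1)) * Q)
    (hH : H = 2 * s ^ (-1 : ℝ) * S) :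
    c ^ ((3 * p - 7) / (3 - p)) * (1 / β * (1 / (1 - u))) ^ (1 / β) *
        (c ^ (3 - p) + (c / β * (1 / (1 - u))) ^ 2 * w ^ (3 - p)
          - c ^ 2 / β * (1 / (1 - u)) * w ^ (2 - p) * H)
      = c ^ (1 - p) * (P ^ (1 / β) * P ^ 2)⁻¹ * (s * integrandNumerator p (P, Q, S)) := by
  have hp1 : p - 1 ≠ 0 := by linarith
  have hp3 : 3 - p ≠ 0 := by linarith
  have hβ0 : 0 < β := by rw [hβ]; exact div_pos (by linarith) (by linarith)
  have ht : 0 < s ^ β := by positivity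
  have hu' : 1 / (1 - u) = β * s ^ β / (c * P) := by
    rw [hu, Real.rpow_neg hs.le]; field_simp
  have hroot :
      (1 / β * (β * s ^ β / (c * P))) ^ (1 / β) = s / (c ^ (1 / β) * P ^ (1 / β)) := by
    rw [show 1 / β * (β * s ^ β / (c * P)) = s ^ β / (c * P) by field_simp,
      Real.div_rpow ht.le (by positivity), Real.mul_rpow hc.le hP.le,
      ← Real.rpow_mul hs.le, mul_one_div_cancel hβ0.ne', Real.rpow_one]
  have hw_pow (k : ℝ) : w ^ k = c ^ k * Q ^ k * s ^ (-(β + 1) * k) := by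
    rw [hw, Real.mul_rpow (by positivity) hQ.le, Real.mul_rpow hc.le (by positivity),
      ← Real.rpow_mul hs.le]; ring
  have hs3 : s ^ (-(β + 1) * (3 - p)) = (s ^ β * s ^ β)⁻¹ := by
    rw [show -(β + 1) * (3 - p) = -(β + β) by rw [hβ]; field_simp; ring,
      Real.rpow_neg hs.le, Real.rpow_add hs]
  have hs2 : s ^ (-(β + 1) * (2 - p)) = s / s ^ β := by
    rw [show -(β + 1) * (2 - p) = 1 - β by rw [hβ]; field_simp; ring,
      Real.rpow_sub hs, Real.rpow_one]
  have hc1 : c ^ ((3 * p - 7) / (3 - p)) = c ^ (1 - p) * c ^ (1 / β) / c ^ (3 - p) := by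
    rw [← Real.rpow_add hc, ← Real.rpow_sub hc]; congr 1; rw [hβ]; field_simp; ring
  have hc2 : c ^ (3 - p) = c * c ^ (2 - p) := by
    rw [show 3 - p = 1 + (2 - p) by ring, Real.rpow_add hc, Real.rpow_one]
  rw [hu', hroot, hw_pow, hw_pow, hs3, hs2, hH, Real.rpow_neg_one, hc1, hc2, integrandNumerator]
  field_simp

theorem p_harmonic_integrand_limit (p m c R : ℝ) (a : E3)
    (hp : 1 < p) (hp' : p < 3) (hc : 0 < c)
    (β : ℝ) (hβ : β = (3 - p) / (p - 1))
    (φ : E3 → ℝ) (hφ : ∀ x : E3, φ x = ⟪a, x⟫ / ‖x‖)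
    (u w H : E3 → ℝ)
    (hu : (fun x : E3 => u x -
        (1 - c / β * ‖x‖ ^ (-β)
          + (3 - p) / 2 * c * (m + φ x) * ‖x‖ ^ (-(2 / (p - 1)))))
      =o[normAtTop] fun x : E3 => ‖x‖ ^ (-(2 / (p - 1))))
    (hw : (fun x : E3 => w x -
        c * ‖x‖ ^ (-(2 / (p - 1)))
          * (1 - (2 * m / (p - 1) + (3 - p) / (p - 1) * φ x) / ‖x‖))
      =o[normAtTop] fun x : E3 => ‖x‖ ^ (-(2 / (p - 1)) - 1))
    (hH : (fun x : E3 => H x -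
        2 / ‖x‖ * (1 - (2 * m + (3 - p) / 2 * φ x) / ‖x‖))
      =o[normAtTop] fun x : E3 => ‖x‖ ^ (-2 : ℝ))
    (I : E3 → ℝ)
    (hI : ∀ x : E3, R < ‖x‖ → I x =
      c ^ ((3 * p - 7) / (3 - p)) * (1 / β * (1 / (1 - u x))) ^ (1 / β) *
        (c ^ (3 - p)
          + (c / β * (1 / (1 - u x))) ^ 2 * w x ^ (3 - p)
          - c ^ 2 / β * (1 / (1 - u x)) * w x ^ (2 - p) * H x)) :
    Filter.Tendsto I normAtTop (nhds (2 * m * c ^ (1 - p))) := by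
  have hp1 : p - 1 ≠ 0 := by linarith
  have hβ0 : 0 < β := by rw [hβ]; exact div_pos (by linarith) (by linarith)
  rw [show 2 / (p - 1) = β + 1 by rw [hβ]; field_simp; ring] at hu hw
  have hs : Tendsto (fun x : E3 => ‖x‖) normAtTop atTop := tendsto_comap
  have hs0 : ∀ᶠ x in normAtTop, 0 < ‖x‖ := hs.eventually_gt_atTop 0
  have hP := tendsto_mul_div_rpow_sub_one_add (by positivity) hs0
    (isLittleO_one_sub_sub_rpow (by positivity) hs0 hu)
  have hQ := tendsto_mul_div_rpow_sub_one_add hc.ne' hs0 hw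
  have hS := tendsto_mul_div_rpow_sub_one_add two_ne_zero hs0
    (isLittleO_sub_two_mul_rpow_neg_one hs0 hH)
  have hgO (k₀ k₁ : ℝ) : (fun x => k₀ + k₁ * φ x) =O[normAtTop] fun _ => (1 : ℝ) :=
    (isBigO_const_const _ one_ne_zero _).add
      (((isBigO_inner_div_norm normAtTop a).congr_left fun x => (hφ x).symm).const_mul_left _)
  have hgP : (fun x => (3 - p) / 2 * c * (m + φ x) / (c / β)) =O[normAtTop] fun _ => (1 : ℝ) :=
    (hgO (β * (3 - p) / 2 * m) (β * (3 - p) / 2)).congr_left fun x => by field_simp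
  have hlim := tendsto_integrand_of_expansions (p := p) (β := β) (L := 2 * m) hs hP hQ hS
    hgP (hgO _ _) (hgO _ _) (tendsto_const_nhds.congr fun x => by field_simp; ring)
  have hP0 := (tendsto_one_of_tendsto_mul_sub_one_add hs hP hgP).eventually (lt_mem_nhds one_pos)
  have hQ0 := (tendsto_one_of_tendsto_mul_sub_one_add hs hQ (hgO _ _)).eventually
    (lt_mem_nhds one_pos)
  rw [show 2 * m * c ^ (1 - p) = c ^ (1 - p) * (2 * m) by ring]
  refine (hlim.const_mul _).congr' ?_
  filter_upwards [hs.eventually_gt_atTop R, hs0, hP0, hQ0] with x hR hx hPx hQx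
  rw [hI x hR, integrand_eq hp hp' hβ hc hx hPx hQx, mul_assoc]
  all_goals exact (mul_div_cancel₀ _ (by positivity)).symm
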